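/- Let S be a set and τ ⊆ S. For each n ≥ 1 let F_n be a list of r_n ≥ 1 functions S → ℂ and G_n a list of s_n ≥ 1 functions S → ℂ, and let H_n be the concatenated list of the r_n + s_n functions of F_n followed by those of G_n. Let e^F_n, e^G_n, e^⊕_n be positive integers such that e^⊕_n / (r_n + s_n) → ∞, e^F_n / e^⊕_n → α, and e^G_n / e^⊕_n → β as n → ∞, with α, β ≥ 0. Assume t_{F_n}(τ) and t_{G_n}(τ) are finite for each n, and that A = limsup_n t_{F_n}(τ)^{1/e^F_n} and B = limsup_n t_{G_n}(τ)^{1/e^G_n} are finite and strictly positive. Then limsup_n t_{H_n}(τ)^{1/e^⊕_n} ≤ A^α · B^β. -/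

import Mathlib

/-!
Expanding both block determinants, every term `sign π • ∏ i, M (π i) i` of `det M` occurs
exactly `r! s!` times in `∑ σ, sign σ • det M[σ(inl), inl] * det M[σ(inr), inr]`. Hence
`t_H ≤ (r + s).choose r * t_F * t_G ≤ 2 ^ (r + s) * t_F * t_G`. After taking `e^⊕`-th roots the
factor `2 ^ ((r + s) / e^⊕)` tends to `1`, and `t_F ^ (1 / e^⊕) = (t_F ^ (1 / e^F)) ^ (e^F / e^⊕)`
has limsup at most `A ^ α` because the exponents converge to `α`.
-/

open Filter
open scoped ENNReal

/-- The Vandermonde supremum `t_{(m_1,…,m_N)}(τ)`: the supremum over all tuples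
`z : ι → S` of points of `τ` of the absolute value of the generalized Vandermonde
determinant `det (m j (z i))`, valued in `[0, ∞]`. -/
noncomputable def vandSup {S ι : Type*} [Fintype ι] [DecidableEq ι]
    (τ : Set S) (m : ι → S → ℂ) : ℝ≥0∞ :=
  ⨆ (z : ι → S) (_ : ∀ i, z i ∈ τ),
    (‖(Matrix.of fun i j : ι => m j (z i)).det‖₊ : ℝ≥0∞)

open Topology Equiv

namespace Matrix

variable {R m n : Type*} [CommRing R] [Fintype m] [Fintype n] [DecidableEq m] [DecidableEq n]

theorem sign_smul_det_submatrix_mul_det_submatrix (M : Matrix (m ⊕ n) (m ⊕ n) R)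
    (σ : Perm (m ⊕ n)) :
    Perm.sign σ •
        ((M.submatrix (σ ∘ Sum.inl) Sum.inl).det * (M.submatrix (σ ∘ Sum.inr) Sum.inr).det) =
      ∑ π : Perm m × Perm n, Perm.sign (σ * Perm.sumCongr π.1 π.2) •
        ∏ i, M ((σ * Perm.sumCongr π.1 π.2) i) i := by
  rw [det_apply, det_apply, Finset.sum_mul_sum, ← Finset.univ_product_univ, Finset.sum_product,
    Finset.smul_sum]
  refine Finset.sum_congr rfl fun π₁ _ => ?_
  rw [Finset.smul_sum]
  refine Finset.sum_congr rfl fun π₂ _ => ?_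
  rw [Perm.sign_mul, Perm.sign_sumCongr, Fintype.prod_sum_type]
  simp only [submatrix_apply, Function.comp_apply, Perm.mul_apply, sumCongr_apply, Sum.map_inl,
    Sum.map_inr, smul_mul_smul_comm, mul_smul]

theorem factorial_mul_factorial_smul_det_eq_sum (M : Matrix (m ⊕ n) (m ⊕ n) R) :
    ((Fintype.card m).factorial * (Fintype.card n).factorial) • M.det =
      ∑ σ : Perm (m ⊕ n), Perm.sign σ •
        ((M.submatrix (σ ∘ Sum.inl) Sum.inl).det * (M.submatrix (σ ∘ Sum.inr) Sum.inr).det) := by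
  simp_rw [sign_smul_det_submatrix_mul_det_submatrix]
  rw [Finset.sum_comm]
  have hπ : ∀ π : Perm m × Perm n, ∑ σ : Perm (m ⊕ n), Perm.sign (σ * Perm.sumCongr π.1 π.2) •
      ∏ i, M ((σ * Perm.sumCongr π.1 π.2) i) i = M.det := fun π =>
    (Equiv.sum_comp (Equiv.mulRight (Perm.sumCongr π.1 π.2))
      fun σ => Perm.sign σ • ∏ i, M (σ i) i).trans M.det_apply.symm
  rw [Finset.sum_congr rfl fun π _ => hπ π, Finset.sum_const, Finset.card_univ,
    Fintype.card_prod, Fintype.card_perm, Fintype.card_perm]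

end Matrix

section vandSup

variable {S ι κ : Type*} [Fintype ι] [Fintype κ] [DecidableEq ι] [DecidableEq κ]

theorem nnnorm_det_le_vandSup (τ : Set S) (m : ι → S → ℂ) {z : ι → S} (hz : ∀ i, z i ∈ τ) :
    (‖(Matrix.of fun i j : ι => m j (z i)).det‖₊ : ℝ≥0∞) ≤ vandSup τ m :=
  le_iSup₂_of_le z hz le_rfl

theorem vandSup_sumElim_le (τ : Set S) (F : ι → S → ℂ) (G : κ → S → ℂ) :
    vandSup τ (Sum.elim F G) ≤
      ((Fintype.card ι + Fintype.card κ).choose (Fintype.card ι) : ℝ≥0∞) *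
        (vandSup τ F * vandSup τ G) := by
  refine iSup₂_le fun z hz => ?_
  set M : Matrix (ι ⊕ κ) (ι ⊕ κ) ℂ := Matrix.of fun i j => Sum.elim F G j (z i)
  set p : ℕ := (Fintype.card ι).factorial * (Fintype.card κ).factorial
  have hblock : ∀ σ : Perm (ι ⊕ κ),
      (‖Perm.sign σ • ((M.submatrix (σ ∘ Sum.inl) Sum.inl).det *
        (M.submatrix (σ ∘ Sum.inr) Sum.inr).det)‖₊ : ℝ≥0∞) ≤ vandSup τ F * vandSup τ G := by
    intro σ
    rw [nnnorm_units_zsmul, nnnorm_mul, ENNReal.coe_mul]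
    exact mul_le_mul' (nnnorm_det_le_vandSup τ F fun _ => hz _)
      (nnnorm_det_le_vandSup τ G fun _ => hz _)
  have hscaled : (p : ℝ≥0∞) * ‖M.det‖₊ ≤
      p * (((Fintype.card ι + Fintype.card κ).choose (Fintype.card ι) : ℝ≥0∞) *
        (vandSup τ F * vandSup τ G)) :=
    calc (p : ℝ≥0∞) * ‖M.det‖₊ = ‖p • M.det‖₊ := by
          rw [RCLike.nnnorm_nsmul ℝ, nsmul_eq_mul, ENNReal.coe_mul, ENNReal.coe_natCast]
      _ ≤ ∑ σ : Perm (ι ⊕ κ), (‖Perm.sign σ • ((M.submatrix (σ ∘ Sum.inl) Sum.inl).det *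
            (M.submatrix (σ ∘ Sum.inr) Sum.inr).det)‖₊ : ℝ≥0∞) := by
          rw [Matrix.factorial_mul_factorial_smul_det_eq_sum, ← ENNReal.ofNNReal_finsetSum]
          exact ENNReal.coe_le_coe.2 (nnnorm_sum_le _ _)
      _ ≤ ∑ _σ : Perm (ι ⊕ κ), vandSup τ F * vandSup τ G :=
          Finset.sum_le_sum fun σ _ => hblock σ
      _ = _ := by
          rw [Finset.sum_const, Finset.card_univ, Fintype.card_perm, Fintype.card_sum,
            ← Nat.choose_mul_factorial_mul_factorial (Nat.le_add_right _ _),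
            Nat.add_sub_cancel_left]
          simp only [p]
          push_cast
          ring
  exact (ENNReal.mul_le_mul_iff_right (by positivity) (ENNReal.natCast_ne_top p)).1 hscaled

theorem vandSup_sumElim_rpow_le (τ : Set S) (F : ι → S → ℂ) (G : κ → S → ℂ) {e : ℝ}
    (he : 0 ≤ e) :
    vandSup τ (Sum.elim F G) ^ e ≤
      2 ^ ((Fintype.card ι + Fintype.card κ : ℕ) * e) * (vandSup τ F ^ e * vandSup τ G ^ e) := by
  have hchoose : ((Fintype.card ι + Fintype.card κ).choose (Fintype.card ι) : ℝ≥0∞) ≤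
      2 ^ (Fintype.card ι + Fintype.card κ) := by
    exact_mod_cast Nat.choose_le_two_pow _ _
  calc vandSup τ (Sum.elim F G) ^ e
      ≤ (2 ^ (Fintype.card ι + Fintype.card κ) * (vandSup τ F * vandSup τ G)) ^ e :=
        ENNReal.rpow_le_rpow ((vandSup_sumElim_le τ F G).trans (mul_le_mul_left hchoose _)) he
    _ = _ := by
        rw [ENNReal.mul_rpow_of_nonneg _ _ he, ENNReal.mul_rpow_of_nonneg _ _ he,
          ← ENNReal.rpow_natCast, ← ENNReal.rpow_mul]

end vandSup

theorem ENNReal.rpow_one_div_rpow_div (x : ℝ≥0∞) {p : ℝ} (hp : p ≠ 0) (q : ℝ) :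
    (x ^ (1 / p)) ^ (p / q) = x ^ (1 / q) := by
  rw [← ENNReal.rpow_mul]
  congr 1
  field_simp

theorem Filter.Tendsto.const_ennrpow {ι : Type*} {l : Filter ι} {a : ℝ≥0∞} (ha0 : a ≠ 0)
    (hatop : a ≠ ⊤) {b : ι → ℝ} {α : ℝ} (hb : Tendsto b l (𝓝 α)) :
    Tendsto (fun i => a ^ b i) l (𝓝 (a ^ α)) := by
  lift a to NNReal using hatop
  have ha0' : a ≠ 0 := by exact_mod_cast ha0
  simp only [← ENNReal.coe_rpow_of_ne_zero ha0']
  exact ENNReal.tendsto_coe.2 (tendsto_const_nhds.nnrpow hb (Or.inl ha0'))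

section limsup

variable {ι : Type*} {l : Filter ι} [l.NeBot]

theorem ENNReal.limsup_rpow_le_rpow_limsup {a : ι → ℝ≥0∞} {b : ι → ℝ} {α : ℝ}
    (ha : limsup a l ≠ ⊤) (hb : Tendsto b l (𝓝 α)) (hb0 : ∀ᶠ i in l, 0 ≤ b i) :
    limsup (fun i => a i ^ b i) l ≤ limsup a l ^ α := by
  have hcont : Tendsto (fun c : ℝ≥0∞ => c ^ α) (𝓝[>] limsup a l) (𝓝 (limsup a l ^ α)) :=
    ENNReal.continuous_rpow_const.continuousAt.tendsto.mono_left nhdsWithin_le_nhds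
  have : (𝓝[>] limsup a l).NeBot := nhdsGT_neBot_of_exists_gt ⟨⊤, ha.lt_top⟩
  refine ge_of_tendsto hcont ?_
  filter_upwards [Ioo_mem_nhdsGT ha.lt_top] with c ⟨hac, hctop⟩
  calc limsup (fun i => a i ^ b i) l ≤ limsup (fun i => c ^ b i) l := by
        refine limsup_le_limsup ?_
        filter_upwards [eventually_lt_of_limsup_lt hac, hb0] with i hai hbi
        exact ENNReal.rpow_le_rpow hai.le hbi
    _ = c ^ α := (hb.const_ennrpow (pos_of_gt hac).ne' hctop.ne).limsup_eq

theorem ENNReal.limsup_rpow_one_div_le {x : ι → ℝ≥0∞} {p q : ι → ℝ} {α : ℝ}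
    (hp : ∀ i, p i ≠ 0) (hpq : ∀ᶠ i in l, 0 ≤ p i / q i)
    (hlim : Tendsto (fun i => p i / q i) l (𝓝 α))
    (hx : limsup (fun i => x i ^ (1 / p i)) l ≠ ⊤) :
    limsup (fun i => x i ^ (1 / q i)) l ≤ limsup (fun i => x i ^ (1 / p i)) l ^ α := by
  simpa only [ENNReal.rpow_one_div_rpow_div _ (hp _)] using
    ENNReal.limsup_rpow_le_rpow_limsup hx hlim hpq

end limsup

theorem limsup_vandSup_directSum_le_general
    {S : Type*} (τ : Set S) (r s : ℕ → ℕ)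
    (F : ∀ n, Fin (r n) → S → ℂ) (G : ∀ n, Fin (s n) → S → ℂ)
    (eF eG eS : ℕ → ℕ)
    (heF : ∀ n, 0 < eF n) (heG : ∀ n, 0 < eG n)
    (hgrow : Tendsto (fun n => (eS n : ℝ) / ((r n : ℝ) + (s n : ℝ))) atTop atTop)
    (α β : ℝ) (hα : 0 ≤ α) (hβ : 0 ≤ β)
    (hαlim : Tendsto (fun n => (eF n : ℝ) / (eS n : ℝ)) atTop (nhds α))
    (hβlim : Tendsto (fun n => (eG n : ℝ) / (eS n : ℝ)) atTop (nhds β))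
    (A B : ℝ≥0∞)
    (hA : A = limsup (fun n => vandSup τ (F n) ^ (1 / (eF n : ℝ))) atTop)
    (hB : B = limsup (fun n => vandSup τ (G n) ^ (1 / (eG n : ℝ))) atTop)
    (hAtop : A ≠ ⊤) (hBtop : B ≠ ⊤) :
    limsup (fun n =>
        vandSup τ (Sum.elim (F n) (G n) : Fin (r n) ⊕ Fin (s n) → S → ℂ)
          ^ (1 / (eS n : ℝ))) atTop
      ≤ A ^ α * B ^ β := by
  subst hA hB
  have hF := ENNReal.limsup_rpow_one_div_le (fun n => Nat.cast_ne_zero.2 (heF n).ne')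
    (Eventually.of_forall fun n => by positivity) hαlim hAtop
  have hG := ENNReal.limsup_rpow_one_div_le (fun n => Nat.cast_ne_zero.2 (heG n).ne')
    (Eventually.of_forall fun n => by positivity) hβlim hBtop
  have hdim : Tendsto (fun n => ((r n + s n : ℕ) : ℝ) * (1 / (eS n : ℝ))) atTop (𝓝 0) :=
    hgrow.inv_tendsto_atTop.congr fun n => by rw [Pi.inv_apply, inv_div]; push_cast; ring
  have hC := (hdim.const_ennrpow two_ne_zero ENNReal.ofNat_ne_top).limsup_eq
  rw [ENNReal.rpow_zero] at hC
  calc _ ≤ limsup (fun n => (2 : ℝ≥0∞) ^ (((r n + s n : ℕ) : ℝ) * (1 / (eS n : ℝ))) *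
          (vandSup τ (F n) ^ (1 / (eS n : ℝ)) * vandSup τ (G n) ^ (1 / (eS n : ℝ)))) atTop :=
        limsup_le_limsup (Eventually.of_forall fun n => by
          simpa only [Fintype.card_fin] using
            vandSup_sumElim_rpow_le τ (F n) (G n) (e := 1 / (eS n : ℝ)) (by positivity))
    _ ≤ 1 * (_ ^ α * _ ^ β) := by
        refine (ENNReal.limsup_mul_le' (.inl (hC ▸ one_ne_zero))
          (.inl (hC ▸ ENNReal.one_ne_top))).trans ?_
        rw [hC]
        gcongr
        refine (ENNReal.limsup_mul_le' ?_ ?_).trans (mul_le_mul' hF hG)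
        · exact .inr (ne_top_of_le_ne_top (ENNReal.rpow_ne_top_of_nonneg hβ hBtop) hG)
        · exact .inl (ne_top_of_le_ne_top (ENNReal.rpow_ne_top_of_nonneg hα hAtop) hF)
    _ = _ := one_mul _

/-- Upper bound for the supremal transfinite diameter of direct
sums (concatenated lists): `limsup t_{H_n}(τ)^{1/e^⊕_n} ≤ A^α · B^β`. -/
theorem limsup_vandSup_directSum_le
    {S : Type*} (τ : Set S) (r s : ℕ → ℕ)
    (hr : ∀ n, 1 ≤ r n) (hs : ∀ n, 1 ≤ s n)
    (F : ∀ n, Fin (r n) → S → ℂ) (G : ∀ n, Fin (s n) → S → ℂ)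
    (eF eG eS : ℕ → ℕ)
    (heF : ∀ n, 0 < eF n) (heG : ∀ n, 0 < eG n) (heS : ∀ n, 0 < eS n)
    (hgrow : Tendsto (fun n => (eS n : ℝ) / ((r n : ℝ) + (s n : ℝ))) atTop atTop)
    (α β : ℝ) (hα : 0 ≤ α) (hβ : 0 ≤ β)
    (hαlim : Tendsto (fun n => (eF n : ℝ) / (eS n : ℝ)) atTop (nhds α))
    (hβlim : Tendsto (fun n => (eG n : ℝ) / (eS n : ℝ)) atTop (nhds β))
    (hFfin : ∀ n, vandSup τ (F n) ≠ ⊤) (hGfin : ∀ n, vandSup τ (G n) ≠ ⊤)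
    (A B : ℝ≥0∞)
    (hA : A = limsup (fun n => vandSup τ (F n) ^ (1 / (eF n : ℝ))) atTop)
    (hB : B = limsup (fun n => vandSup τ (G n) ^ (1 / (eG n : ℝ))) atTop)
    (hA0 : 0 < A) (hAtop : A ≠ ⊤) (hB0 : 0 < B) (hBtop : B ≠ ⊤) :
    limsup (fun n =>
        vandSup τ (Sum.elim (F n) (G n) : Fin (r n) ⊕ Fin (s n) → S → ℂ)
          ^ (1 / (eS n : ℝ))) atTop
      ≤ A ^ α * B ^ β :=
  limsup_vandSup_directSum_le_general τ r s F G eF eG eS heF heG hgrow α β hα hβ hαlim hβlim A B hA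
    hB hAtop hBtop
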